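/- arXiv:1902.09646 — 2 statements merged into one kernel-verified Lean document; each statement's English description precedes it below -/
import Mathlib

section
/- Let p > 0, let r̂ : ℝ → [0,p] be bounded and measurable, and let c ∈ ℝ satisfy the indifference equation c + E[r̂ ∥ c] = p. Then the expected profit satisfies Π(p, r̂, c) > c·Φ((θ−c)/σ) if and only if the expected reward at the cutoff exceeds the ex-ante expected reward paid per purchase, i.e. E[r̂ ∥ c] > (∫_c^∞ E[r̂ ∥ v_i] · φ((θ−v_i)/σ)/σ dv_i) / (∫_c^∞ φ((θ−v_i)/σ)/σ dv_i). -/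
noncomputable section

open MeasureTheory Real Set Filter

/-- standard normal pdf φ -/
def stdPdf (x : ℝ) : ℝ := (Real.sqrt (2 * Real.pi))⁻¹ * Real.exp (-(x ^ 2) / 2)

/-- standard normal cdf Φ -/
def stdCdf (x : ℝ) : ℝ := ∫ t in Set.Iic x, stdPdf t

/-- posterior expected reward  E[r ‖ x] = ∫ r(v) φ((v-μ_x)/σ_v)/σ_v dv, where
    μ_x = τ x + (1-τ) θ, τ = σθ²/(σε²+σθ²), σ_v = σε σθ / √(σε²+σθ²). -/
def postReward (θ σε σθ : ℝ) (r : ℝ → ℝ) (x : ℝ) : ℝ :=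
  ∫ v, r v * stdPdf ((v - (σθ ^ 2 / (σε ^ 2 + σθ ^ 2) * x +
      (1 - σθ ^ 2 / (σε ^ 2 + σθ ^ 2)) * θ)) / (σε * σθ / Real.sqrt (σε ^ 2 + σθ ^ 2))) /
    (σε * σθ / Real.sqrt (σε ^ 2 + σθ ^ 2))

/-- expected profit  Π(p, r, c) = ∫ (p - r(v)) Φ((v-c)/σε) φ((θ-v)/σθ)/σθ dv. -/
def profit (θ σε σθ : ℝ) (p : ℝ) (r : ℝ → ℝ) (c : ℝ) : ℝ :=
  ∫ v, (p - r v) * stdCdf ((v - c) / σε) * stdPdf ((θ - v) / σθ) / σθ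

open ProbabilityTheory

/-! ### Auxiliary lemmas -/

lemma stdPdf_nonneg (x : ℝ) : 0 ≤ stdPdf x := by
  unfold stdPdf; positivity

lemma stdPdf_pos (x : ℝ) : 0 < stdPdf x := by
  unfold stdPdf
  have : (0:ℝ) < Real.sqrt (2 * Real.pi) := Real.sqrt_pos.2 (by positivity)
  positivity

lemma continuous_stdPdf : Continuous stdPdf := by
  unfold stdPdf; continuity

lemma stdPdf_eq_gauss {s : ℝ} (hs : 0 < s) (m x : ℝ) :
    stdPdf ((x - m) / s) / s = gaussianPDFReal m (⟨s ^ 2, sq_nonneg s⟩ : NNReal) x := by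
  unfold stdPdf gaussianPDFReal
  change (√(2 * π))⁻¹ * rexp (-((x - m) / s) ^ 2 / 2) / s =
    (√(2 * π * s ^ 2))⁻¹ * rexp (-(x - m) ^ 2 / (2 * s ^ 2))
  have h1 : Real.sqrt (2 * π * s ^ 2) = Real.sqrt (2 * π) * s := by
    rw [Real.sqrt_mul (by positivity), Real.sqrt_sq hs.le]
  have h2 : -(((x - m) / s) ^ 2) / 2 = -(x - m) ^ 2 / (2 * s ^ 2) := by
    rw [div_pow]
    field_simp
  rw [h1, h2, mul_inv]
  ring

lemma stdPdf_symm (a b : ℝ) (s : ℝ) : stdPdf ((a - b) / s) = stdPdf ((b - a) / s) := by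
  unfold stdPdf
  congr 2
  ring

lemma integrable_stdPdf_div {s : ℝ} (hs : 0 < s) (m : ℝ) :
    Integrable (fun x => stdPdf ((x - m) / s) / s) := by
  have : (fun x => stdPdf ((x - m) / s) / s) = gaussianPDFReal m ⟨s ^ 2, sq_nonneg s⟩ :=
    funext fun x => stdPdf_eq_gauss hs m x
  rw [this]
  exact integrable_gaussianPDFReal m _

lemma integral_stdPdf_div {s : ℝ} (hs : 0 < s) (m : ℝ) :
    ∫ x, stdPdf ((x - m) / s) / s = 1 := by
  have h : (fun x => stdPdf ((x - m) / s) / s) = gaussianPDFReal m ⟨s ^ 2, sq_nonneg s⟩ :=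
    funext fun x => stdPdf_eq_gauss hs m x
  rw [h]
  exact integral_gaussianPDFReal_eq_one m (by
    intro h0
    have h0' := congrArg (fun z : NNReal => (z : ℝ)) h0
    change s ^ 2 = 0 at h0'
    exact (by positivity : (0:ℝ) < s ^ 2).ne' h0')

lemma integrable_stdPdf_div' {s : ℝ} (hs : 0 < s) (m : ℝ) :
    Integrable (fun x => stdPdf ((m - x) / s) / s) := by
  have : (fun x => stdPdf ((m - x) / s) / s) = fun x => stdPdf ((x - m) / s) / s :=
    funext fun x => by rw [stdPdf_symm]
  rw [this]
  exact integrable_stdPdf_div hs m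

lemma integral_stdPdf_div' {s : ℝ} (hs : 0 < s) (m : ℝ) :
    ∫ x, stdPdf ((m - x) / s) / s = 1 := by
  have : (fun x => stdPdf ((m - x) / s) / s) = fun x => stdPdf ((x - m) / s) / s :=
    funext fun x => by rw [stdPdf_symm]
  rw [this]
  exact integral_stdPdf_div hs m

lemma shift_Iic (f : ℝ → ℝ) (a b : ℝ) :
    ∫ w in Iic a, f (w + b) = ∫ t in Iic (a + b), f t := by
  have A : MeasurableEmbedding (fun w : ℝ => w + b) :=
    (Homeomorph.addRight b).isClosedEmbedding.measurableEmbedding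
  have h := A.setIntegral_map (μ := volume) f (Iic (a + b))
  rw [map_add_right_eq_self volume b] at h
  rw [h]
  congr 1
  ext w
  simp [mem_preimage, mem_Iic]

lemma integral_Ioi_sub_div (f : ℝ → ℝ) {s : ℝ} (hs : 0 < s) (d c : ℝ) :
    ∫ x in Ioi c, f ((d - x) / s) / s = ∫ t in Iic ((d - c) / s), f t := by
  rw [integral_div]
  have step1 : ∫ x in Ioi c, f ((d - x) / s) =
      ∫ x in Ioi c, (fun y => f (d / s - y)) (x * s⁻¹) := by
    refine setIntegral_congr_fun measurableSet_Ioi fun x _ => ?_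
    congr 1
    field_simp
  have step2 := integral_comp_mul_right_Ioi (fun y => f (d / s - y)) c (inv_pos.2 hs)
  rw [step1, step2, inv_inv, smul_eq_mul]
  have step3 : ∫ y in Ioi (c * s⁻¹), f (d / s - y) =
      ∫ y in Ioi (c * s⁻¹), (fun w => f (w + d / s)) (-y) := by
    refine setIntegral_congr_fun measurableSet_Ioi fun y _ => ?_
    congr 1
    ring
  have step4 := integral_comp_neg_Ioi (c * s⁻¹) (fun w => f (w + d / s))
  rw [step3, step4, shift_Iic]
  have : -(c * s⁻¹) + d / s = (d - c) / s := by field_simp; ring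
  rw [this, mul_comm s, mul_div_assoc, div_self hs.ne', mul_one]

lemma pdf_mul (A B : ℝ) (hA : 0 < A) (hB : 0 < B) (θ x v : ℝ) :
    stdPdf ((v - x) / A) / A * (stdPdf ((θ - v) / B) / B) =
      stdPdf ((v - (B ^ 2 / (A ^ 2 + B ^ 2) * x + (1 - B ^ 2 / (A ^ 2 + B ^ 2)) * θ)) /
          (A * B / Real.sqrt (A ^ 2 + B ^ 2))) / (A * B / Real.sqrt (A ^ 2 + B ^ 2)) *
        (stdPdf ((θ - x) / Real.sqrt (A ^ 2 + B ^ 2)) / Real.sqrt (A ^ 2 + B ^ 2)) := by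
  have hS : 0 < Real.sqrt (A ^ 2 + B ^ 2) := Real.sqrt_pos.2 (by positivity)
  set S := Real.sqrt (A ^ 2 + B ^ 2) with hSdef
  have hS2 : S ^ 2 = A ^ 2 + B ^ 2 := Real.sq_sqrt (by positivity)
  have hv : 0 < A * B / S := by positivity
  have expand : ∀ (s t u w : ℝ), 0 < s → 0 < t →
      stdPdf u / s * (stdPdf w / t) =
        (Real.sqrt (2 * π) * Real.sqrt (2 * π) * (s * t))⁻¹ *
          Real.exp (-(u ^ 2) / 2 + -(w ^ 2) / 2) := by
    intro s t u w hs ht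
    unfold stdPdf
    rw [Real.exp_add]
    field_simp
  rw [expand _ _ _ _ hA hB, expand _ _ _ _ hv hS]
  have hc : A * B / S * S = A * B := by field_simp
  rw [hc]
  congr 1
  have e1 : (A * B / S) ^ 2 = A ^ 2 * B ^ 2 / (A ^ 2 + B ^ 2) := by
    rw [div_pow, hS2, mul_pow]
  have e2 : ((θ - x) / S) ^ 2 = (θ - x) ^ 2 / (A ^ 2 + B ^ 2) := by
    rw [div_pow, hS2]
  rw [div_pow (v - x), div_pow (θ - v), div_pow _ (A*B/S), e1, e2]
  have hAB : (0:ℝ) < A ^ 2 + B ^ 2 := by positivity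
  congr 1
  field_simp
  ring

lemma stdCdf_pos (y : ℝ) : 0 < stdCdf y := by
  unfold stdCdf
  have hint : IntegrableOn stdPdf (Iic y) := by
    have h : stdPdf = fun x => stdPdf ((x - 0) / 1) / 1 := funext fun x => by simp
    rw [h]
    exact (integrable_stdPdf_div one_pos 0).restrict
  rw [setIntegral_pos_iff_support_of_nonneg_ae
    (Eventually.of_forall fun x => stdPdf_nonneg x) hint]
  have hsupp : Function.support stdPdf = univ :=
    eq_univ_of_forall fun x => (stdPdf_pos x).ne'
  rw [hsupp, univ_inter]
  simp [Real.volume_Iic]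


lemma profit_eq (θ A B : ℝ) (hA : 0 < A) (hB : 0 < B) (p : ℝ) (hp : 0 < p)
    (r : ℝ → ℝ) (hmeas : Measurable r) (hrange : ∀ v, r v ∈ Set.Icc 0 p) (c : ℝ) :
    profit θ A B p r c =
      p * (∫ x in Set.Ioi c, stdPdf ((θ - x) / Real.sqrt (A ^ 2 + B ^ 2)) /
            Real.sqrt (A ^ 2 + B ^ 2)) -
        ∫ x in Set.Ioi c, postReward θ A B r x *
          (stdPdf ((θ - x) / Real.sqrt (A ^ 2 + B ^ 2)) / Real.sqrt (A ^ 2 + B ^ 2)) := by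
  have hS : 0 < Real.sqrt (A ^ 2 + B ^ 2) := Real.sqrt_pos.2 (by positivity)
  have hσv : 0 < A * B / Real.sqrt (A ^ 2 + B ^ 2) := by positivity
  set S := Real.sqrt (A ^ 2 + B ^ 2) with hSdef
  set σv : ℝ := A * B / S with hσvdef
  set g : ℝ → ℝ := fun x => stdPdf ((θ - x) / S) / S with hgdef
  set F : ℝ → ℝ → ℝ := fun v x =>
    (p - r v) * (stdPdf ((v - x) / A) / A) * (stdPdf ((θ - v) / B) / B) with hFdef
  have hrv : ∀ v, |p - r v| ≤ p := by
    intro v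
    obtain ⟨h1, h2⟩ := hrange v
    rw [abs_le]
    constructor <;> linarith
  -- measurability of the two-variable function
  have hFmeas : Measurable (Function.uncurry F) := by
    have m1 : Measurable fun z : ℝ × ℝ => p - r z.1 :=
      measurable_const.sub (hmeas.comp measurable_fst)
    have m2 : Measurable fun z : ℝ × ℝ => stdPdf ((z.1 - z.2) / A) / A :=
      ((continuous_stdPdf.comp ((continuous_fst.sub continuous_snd).div_const A)).div_const
        A).measurable
    have m3 : Measurable fun z : ℝ × ℝ => stdPdf ((θ - z.1) / B) / B :=
      ((continuous_stdPdf.comp ((continuous_const.sub continuous_fst).div_const B)).div_const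
        B).measurable
    exact (m1.mul m2).mul m3
  -- integrability on the product
  have hFint : Integrable (Function.uncurry F)
      (volume.prod (volume.restrict (Set.Ioi c))) := by
    refine (integrable_prod_iff hFmeas.aestronglyMeasurable).2 ⟨?_, ?_⟩
    · refine Eventually.of_forall fun v => ?_
      have hint : Integrable (fun x => stdPdf ((v - x) / A) / A)
          (volume.restrict (Set.Ioi c)) := (integrable_stdPdf_div' hA v).restrict
      have := (hint.const_mul (p - r v)).mul_const (stdPdf ((θ - v) / B) / B)
      exact this
    · have hASM : AEStronglyMeasurable
          (fun v => ∫ x, ‖Function.uncurry F (v, x)‖ ∂(volume.restrict (Set.Ioi c)))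
          volume := hFmeas.aestronglyMeasurable.norm.integral_prod_right'
      refine Integrable.mono' ((integrable_stdPdf_div' hB θ).const_mul p) hASM ?_
      refine Eventually.of_forall fun v => ?_
      rw [Real.norm_of_nonneg (integral_nonneg fun x => norm_nonneg _)]
      have heq : ∀ x : ℝ, ‖Function.uncurry F (v, x)‖ =
          |p - r v| * (stdPdf ((θ - v) / B) / B) * (stdPdf ((v - x) / A) / A) := by
        intro x
        have h1 : (0:ℝ) ≤ stdPdf ((v - x) / A) / A := div_nonneg (stdPdf_nonneg _) hA.le
        have h2 : (0:ℝ) ≤ stdPdf ((θ - v) / B) / B := div_nonneg (stdPdf_nonneg _) hB.le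
        simp only [Function.uncurry_apply_pair, hFdef, Real.norm_eq_abs, abs_mul,
          abs_of_nonneg h1, abs_of_nonneg h2]
        ring
      simp_rw [heq]
      rw [MeasureTheory.integral_const_mul]
      have hb1 : ∫ x in Set.Ioi c, stdPdf ((v - x) / A) / A ≤ 1 := by
        have := setIntegral_le_integral (s := Set.Ioi c) (integrable_stdPdf_div' hA v)
          (Eventually.of_forall fun x => div_nonneg (stdPdf_nonneg _) hA.le)
        rw [integral_stdPdf_div' hA v] at this
        exact this
      have hb0 : (0:ℝ) ≤ ∫ x in Set.Ioi c, stdPdf ((v - x) / A) / A :=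
        integral_nonneg fun x => div_nonneg (stdPdf_nonneg _) hA.le
      have hgB : (0:ℝ) ≤ stdPdf ((θ - v) / B) / B := div_nonneg (stdPdf_nonneg _) hB.le
      calc |p - r v| * (stdPdf ((θ - v) / B) / B) * (∫ x in Set.Ioi c, stdPdf ((v - x) / A) / A)
          ≤ p * (stdPdf ((θ - v) / B) / B) * 1 := by
            apply mul_le_mul
            · exact mul_le_mul_of_nonneg_right (hrv v) hgB
            · exact hb1
            · exact hb0
            · positivity
        _ = p * (stdPdf ((θ - v) / B) / B) := by ring
  -- profit as a double integral
  have hcdf : ∀ v : ℝ, stdCdf ((v - c) / A) = ∫ x in Set.Ioi c, stdPdf ((v - x) / A) / A :=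
    fun v => (integral_Ioi_sub_div stdPdf hA v c).symm
  have hprofit1 : profit θ A B p r c = ∫ v, ∫ x in Set.Ioi c, F v x := by
    unfold profit
    refine integral_congr_ae (Eventually.of_forall fun v => ?_)
    dsimp only
    simp only [hFdef]
    rw [MeasureTheory.integral_mul_const, MeasureTheory.integral_const_mul, hcdf v]
    ring
  rw [hprofit1, integral_integral_swap hFint]
  -- the posterior integrals
  have hpost : ∀ x : ℝ, postReward θ A B r x =
      ∫ v, r v * (stdPdf ((v - (B ^ 2 / (A ^ 2 + B ^ 2) * x +
        (1 - B ^ 2 / (A ^ 2 + B ^ 2)) * θ)) / σv) / σv) := by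
    intro x
    unfold postReward
    rw [← hSdef]
    exact integral_congr_ae (Eventually.of_forall fun v => mul_div_assoc _ _ _)
  have hinner : ∀ x : ℝ, (∫ v, F v x) = (p - postReward θ A B r x) * g x := by
    intro x
    set M : ℝ := B ^ 2 / (A ^ 2 + B ^ 2) * x + (1 - B ^ 2 / (A ^ 2 + B ^ 2)) * θ with hMdef
    have h1 : ∀ v : ℝ, F v x =
        (p * (stdPdf ((v - M) / σv) / σv) - r v * (stdPdf ((v - M) / σv) / σv)) * g x := by
      intro v
      have h := pdf_mul A B hA hB θ x v
      rw [← hSdef, ← hMdef] at h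
      simp only [hFdef, hgdef]
      rw [mul_assoc, h]
      ring
    simp_rw [h1]
    rw [MeasureTheory.integral_mul_const]
    congr 1
    have hi1 : Integrable (fun v => p * (stdPdf ((v - M) / σv) / σv)) :=
      (integrable_stdPdf_div hσv M).const_mul p
    have hi2 : Integrable (fun v => r v * (stdPdf ((v - M) / σv) / σv)) :=
      Integrable.bdd_mul (integrable_stdPdf_div hσv M) hmeas.aestronglyMeasurable
        (Eventually.of_forall fun v => (by
          rw [Real.norm_eq_abs, abs_of_nonneg (hrange v).1]
          exact (hrange v).2 : ‖r v‖ ≤ p))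
    rw [integral_sub hi1 hi2, MeasureTheory.integral_const_mul, integral_stdPdf_div hσv M,
      mul_one, hpost x]
  have hFx : (fun x => ∫ v, F v x) = fun x => (p - postReward θ A B r x) * g x :=
    funext hinner
  rw [hFx]
  -- split the integral
  have hqg_int : Integrable (fun x => (p - postReward θ A B r x) * g x)
      (volume.restrict (Set.Ioi c)) := by
    have h := hFint.integral_prod_right
    simp only [Function.uncurry_apply_pair] at h
    rwa [hFx] at h
  have hg_int : Integrable g (volume.restrict (Set.Ioi c)) :=
    (integrable_stdPdf_div' hS θ).restrict
  have hqg : Integrable (fun x => postReward θ A B r x * g x)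
      (volume.restrict (Set.Ioi c)) := by
    have h3 : (fun x => postReward θ A B r x * g x) =
        fun x => p * g x - (p - postReward θ A B r x) * g x := funext fun x => by ring
    rw [h3]
    exact (hg_int.const_mul p).sub hqg_int
  have hsplit : (fun x => (p - postReward θ A B r x) * g x) =
      fun x => p * g x - postReward θ A B r x * g x := funext fun x => by ring
  rw [hsplit, integral_sub (hg_int.const_mul p) hqg, MeasureTheory.integral_const_mul]

/-- the reward program yields expected profit exceeding that of the no-reward
    price `c` iff the reward expected at the cutoff exceeds the ex-ante expected reward
    paid per purchase. -/
theorem stmt_0 (θ σε σθ : ℝ) (hσε : 0 < σε) (hσθ : 0 < σθ)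
    (σ : ℝ) (hσ : σ = Real.sqrt (σε ^ 2 + σθ ^ 2))
    (p : ℝ) (hp : 0 < p)
    (r : ℝ → ℝ) (hmeas : Measurable r) (hrange : ∀ v, r v ∈ Set.Icc 0 p)
    (c : ℝ) (hind : c + postReward θ σε σθ r c = p) :
    profit θ σε σθ p r c > c * stdCdf ((θ - c) / σ) ↔
      postReward θ σε σθ r c >
        (∫ vi in Set.Ioi c, postReward θ σε σθ r vi * (stdPdf ((θ - vi) / σ) / σ)) /
          (∫ vi in Set.Ioi c, stdPdf ((θ - vi) / σ) / σ) := by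
  subst hσ
  have hS : 0 < Real.sqrt (σε ^ 2 + σθ ^ 2) := Real.sqrt_pos.2 (by positivity)
  have key := profit_eq θ σε σθ hσε hσθ p hp r hmeas hrange c
  rw [key]
  have hA0 : (∫ x in Set.Ioi c, stdPdf ((θ - x) / Real.sqrt (σε ^ 2 + σθ ^ 2)) /
      Real.sqrt (σε ^ 2 + σθ ^ 2)) = stdCdf ((θ - c) / Real.sqrt (σε ^ 2 + σθ ^ 2)) :=
    integral_Ioi_sub_div stdPdf hS θ c
  rw [hA0]
  have hK : 0 < stdCdf ((θ - c) / Real.sqrt (σε ^ 2 + σθ ^ 2)) := stdCdf_pos _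
  set K := stdCdf ((θ - c) / Real.sqrt (σε ^ 2 + σθ ^ 2)) with hKdef
  set I := ∫ vi in Set.Ioi c, postReward θ σε σθ r vi *
    (stdPdf ((θ - vi) / Real.sqrt (σε ^ 2 + σθ ^ 2)) / Real.sqrt (σε ^ 2 + σθ ^ 2)) with hIdef
  set qc := postReward θ σε σθ r c with hqcdef
  have hqK : qc * K = p * K - c * K := by
    have h : qc = p - c := by linarith
    rw [h]; ring
  rw [gt_iff_lt, gt_iff_lt, div_lt_iff₀ hK]
  constructor <;> intro h <;> linarith
end
end

section
/- Let r̂ : ℝ → ℝ be measurable with r_min ≤ r̂(v) ≤ r_max for all v. Then the posterior expected reward g(v_i) = E[r̂ ∥ v_i] is differentiable in v_i with g′(v_i) = (τ/σ_v)·∫_ℝ r̂(v)·((v − μ_{v_i})/σ_v)·φ((v − μ_{v_i})/σ_v)/σ_v dv, and |g′(v_i)| ≤ τ·(r_max − r_min)/(√(2π)·σ_v) for all v_i ∈ ℝ. -/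
noncomputable section

open MeasureTheory Real Set Filter

open Topology

namespace Stmt18Aux

lemma stdPdf_nonneg (t : ℝ) : 0 ≤ stdPdf t := by unfold stdPdf; positivity

lemma stdPdf_zero : stdPdf 0 = (Real.sqrt (2 * Real.pi))⁻¹ := by
  simp [stdPdf]

lemma continuous_stdPdf : Continuous stdPdf := by
  unfold stdPdf; fun_prop

lemma hasDerivAt_stdPdf (t : ℝ) : HasDerivAt stdPdf (-t * stdPdf t) t := by
  have h1 : HasDerivAt (fun t : ℝ => -(t ^ 2) / 2) (-t) t := by
    have := (hasDerivAt_pow 2 t).neg.div_const 2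
    refine this.congr_deriv ?_
    ring
  have h2 := (h1.exp).const_mul ((Real.sqrt (2 * Real.pi))⁻¹)
  refine h2.congr_deriv ?_
  unfold stdPdf
  ring

lemma integrable_gauss (b μc : ℝ) (hb : 0 < b) :
    Integrable (fun v : ℝ => Real.exp (-b * (v - μc) ^ 2)) :=
  (integrable_exp_neg_mul_sq hb).comp_sub_right μc

lemma integrable_stdPdf_comp (μc c : ℝ) (hc : 0 < c) :
    Integrable (fun v : ℝ => stdPdf ((v - μc) / c)) := by
  have h : (fun v : ℝ => stdPdf ((v - μc) / c)) =
      fun v => (Real.sqrt (2 * Real.pi))⁻¹ * Real.exp (-(1 / (2 * c ^ 2)) * (v - μc) ^ 2) := by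
    funext v
    unfold stdPdf
    congr 1
    rw [div_pow]
    field_simp
  rw [h]
  exact (integrable_gauss _ _ (by positivity)).const_mul _

lemma abs_mul_stdPdf_le (t : ℝ) :
    |t| * stdPdf t ≤ (Real.sqrt (2 * Real.pi))⁻¹ * Real.exp (-(t ^ 2) / 4) := by
  have h1 : |t| ≤ Real.exp (t ^ 2 / 4) := by
    have h2 := Real.add_one_le_exp (t ^ 2 / 4)
    nlinarith [sq_nonneg (|t| - 2), sq_abs t]
  have h3 : |t| * Real.exp (-(t ^ 2) / 2) ≤ Real.exp (-(t ^ 2) / 4) := by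
    have := mul_le_mul_of_nonneg_right h1 (Real.exp_nonneg (-(t ^ 2) / 2))
    rwa [← Real.exp_add, show t ^ 2 / 4 + -(t ^ 2) / 2 = -(t ^ 2) / 4 by ring] at this
  have h4 : (0:ℝ) ≤ (Real.sqrt (2 * Real.pi))⁻¹ := by positivity
  unfold stdPdf
  calc |t| * ((Real.sqrt (2 * Real.pi))⁻¹ * Real.exp (-(t ^ 2) / 2))
      = (Real.sqrt (2 * Real.pi))⁻¹ * (|t| * Real.exp (-(t ^ 2) / 2)) := by ring
    _ ≤ _ := mul_le_mul_of_nonneg_left h3 h4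

lemma tendsto_stdPdf_atTop : Tendsto stdPdf atTop (𝓝 0) := by
  have h1 : Tendsto (fun t : ℝ => -(t ^ 2) / 2) atTop atBot := by
    apply Filter.Tendsto.atBot_div_const two_pos
    exact tendsto_neg_atTop_atBot.comp (tendsto_pow_atTop two_ne_zero)
  have h2 : Tendsto (fun t : ℝ => Real.exp (-(t ^ 2) / 2)) atTop (𝓝 0) :=
    Real.tendsto_exp_atBot.comp h1
  unfold stdPdf
  simpa only [mul_zero] using h2.const_mul ((Real.sqrt (2 * Real.pi))⁻¹)

lemma stdPdf_neg (t : ℝ) : stdPdf (-t) = stdPdf t := by simp [stdPdf]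

lemma tendsto_stdPdf_atBot : Tendsto stdPdf atBot (𝓝 0) := by
  have := tendsto_stdPdf_atTop.comp tendsto_neg_atBot_atTop
  refine this.congr fun t => ?_
  exact stdPdf_neg t

lemma tendsto_comp_atTop (μc c : ℝ) (hc : 0 < c) :
    Tendsto (fun v : ℝ => stdPdf ((v - μc) / c)) atTop (𝓝 0) := by
  apply tendsto_stdPdf_atTop.comp
  apply Filter.Tendsto.atTop_div_const hc
  simpa [sub_eq_add_neg] using tendsto_atTop_add_const_right atTop (-μc) tendsto_id

lemma tendsto_comp_atBot (μc c : ℝ) (hc : 0 < c) :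
    Tendsto (fun v : ℝ => stdPdf ((v - μc) / c)) atBot (𝓝 0) := by
  apply tendsto_stdPdf_atBot.comp
  apply Filter.Tendsto.atBot_div_const hc
  simpa [sub_eq_add_neg] using tendsto_atBot_add_const_right atBot (-μc) tendsto_id

end Stmt18Aux

namespace Stmt18Aux

lemma hasDerivAt_negPdf (μc c : ℝ) (hc : 0 < c) (v : ℝ) :
    HasDerivAt (fun v : ℝ => -stdPdf ((v - μc) / c))
      ((v - μc) / c * stdPdf ((v - μc) / c) / c) v := by
  have hin : HasDerivAt (fun v : ℝ => (v - μc) / c) (1 / c) v := by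
    simpa using ((hasDerivAt_id v).sub_const μc).div_const c
  have h := ((hasDerivAt_stdPdf ((v - μc) / c)).comp v hin).neg
  refine h.congr_deriv ?_
  ring

lemma hasDerivAt_posPdf (μc c : ℝ) (hc : 0 < c) (v : ℝ) :
    HasDerivAt (fun v : ℝ => stdPdf ((v - μc) / c))
      (-((v - μc) / c * stdPdf ((v - μc) / c) / c)) v := by
  have hin : HasDerivAt (fun v : ℝ => (v - μc) / c) (1 / c) v := by
    simpa using ((hasDerivAt_id v).sub_const μc).div_const c
  have h := (hasDerivAt_stdPdf ((v - μc) / c)).comp v hin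
  refine h.congr_deriv ?_
  ring

lemma gauss_eq (μc c : ℝ) (hc : 0 < c) (b : ℝ) (v : ℝ) :
    Real.exp (-(((v - μc) / c) ^ 2) / b) = Real.exp (-(1 / (b * c ^ 2)) * (v - μc) ^ 2) := by
  congr 1
  rw [div_pow]
  field_simp

lemma integrable_J (μc c : ℝ) (hc : 0 < c) :
    Integrable (fun v : ℝ => (v - μc) / c * stdPdf ((v - μc) / c) / c) := by
  apply Integrable.mono'
      (g := fun v => (Real.sqrt (2 * Real.pi))⁻¹ * Real.exp (-(1 / (4 * c ^ 2)) * (v - μc) ^ 2) / c)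
  · exact ((integrable_gauss _ _ (by positivity)).const_mul _).div_const c
  · have hm : Measurable fun v : ℝ => (v - μc) / c := (measurable_id.sub_const μc).div_const c
    exact ((hm.mul (continuous_stdPdf.measurable.comp hm)).div_const c).aestronglyMeasurable
  · filter_upwards with v
    rw [Real.norm_eq_abs, abs_div, abs_of_pos hc, abs_mul, abs_of_nonneg (stdPdf_nonneg _),
      ← gauss_eq μc c hc 4 v]
    exact (div_le_div_iff_of_pos_right hc).mpr (abs_mul_stdPdf_le _)

lemma integral_J_zero (μc c : ℝ) (hc : 0 < c) :
    ∫ v, (v - μc) / c * stdPdf ((v - μc) / c) / c = 0 :=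
  integral_eq_zero_of_hasDerivAt_of_integrable (hasDerivAt_negPdf μc c hc)
    (integrable_J μc c hc) ((integrable_stdPdf_comp μc c hc).neg)

lemma integral_abs_J (μc c : ℝ) (hc : 0 < c) :
    ∫ v, |(v - μc) / c * stdPdf ((v - μc) / c) / c| = 2 * (Real.sqrt (2 * Real.pi))⁻¹ := by
  have hJ := integrable_J μc c hc
  have hIoi : ∫ v in Ioi μc, |(v - μc) / c * stdPdf ((v - μc) / c) / c|
      = (Real.sqrt (2 * Real.pi))⁻¹ := by
    rw [setIntegral_congr_fun measurableSet_Ioi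
      (g := fun v => (v - μc) / c * stdPdf ((v - μc) / c) / c) ?_]
    · have ht : Tendsto (fun v : ℝ => -stdPdf ((v - μc) / c)) atTop (𝓝 0) := by
        simpa using (tendsto_comp_atTop μc c hc).neg
      have h := integral_Ioi_of_hasDerivAt_of_tendsto' (a := μc)
        (fun x _ => hasDerivAt_negPdf μc c hc x) hJ.integrableOn ht
      rw [h]
      simp [stdPdf_zero]
    · intro v hv
      have h1 : (0:ℝ) ≤ (v - μc) / c := div_nonneg (by simp only [mem_Ioi] at hv; linarith) hc.le
      exact abs_of_nonneg (div_nonneg (mul_nonneg h1 (stdPdf_nonneg _)) hc.le)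
  have hIic : ∫ v in Iic μc, |(v - μc) / c * stdPdf ((v - μc) / c) / c|
      = (Real.sqrt (2 * Real.pi))⁻¹ := by
    rw [setIntegral_congr_fun measurableSet_Iic
      (g := fun v => -((v - μc) / c * stdPdf ((v - μc) / c) / c)) ?_]
    · have ht : Tendsto (fun v : ℝ => stdPdf ((v - μc) / c)) atBot (𝓝 0) :=
        tendsto_comp_atBot μc c hc
      have h := integral_Iic_of_hasDerivAt_of_tendsto' (a := μc)
        (fun x _ => hasDerivAt_posPdf μc c hc x) (hJ.neg.integrableOn) ht
      rw [h]
      simp [stdPdf_zero]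
    · intro v hv
      have h1 : (v - μc) / c ≤ 0 := div_nonpos_of_nonpos_of_nonneg
        (by simp only [mem_Iic] at hv; linarith) hc.le
      exact abs_of_nonpos (div_nonpos_of_nonpos_of_nonneg
        (mul_nonpos_of_nonpos_of_nonneg h1 (stdPdf_nonneg _)) hc.le)
  rw [← setIntegral_univ, ← Set.Iic_union_Ioi (a := μc),
    setIntegral_union (Iic_disjoint_Ioi le_rfl) measurableSet_Ioi
      hJ.abs.integrableOn hJ.abs.integrableOn, hIic, hIoi]
  ring

end Stmt18Aux

namespace Stmt18Aux

lemma key (θ a c : ℝ) (ha : 0 < a) (ha1 : a ≤ 1) (hc : 0 < c)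
    (r : ℝ → ℝ) (hmeas : Measurable r) (rmin rmax : ℝ)
    (hrange : ∀ v, rmin ≤ r v ∧ r v ≤ rmax) (vi : ℝ) :
    HasDerivAt (fun x => ∫ v, r v * stdPdf ((v - (a * x + (1 - a) * θ)) / c) / c)
      ((a / c) * ∫ v, r v * ((v - (a * vi + (1 - a) * θ)) / c) *
        stdPdf ((v - (a * vi + (1 - a) * θ)) / c) / c) vi ∧
    |(a / c) * ∫ v, r v * ((v - (a * vi + (1 - a) * θ)) / c) *
        stdPdf ((v - (a * vi + (1 - a) * θ)) / c) / c| ≤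
      a * (rmax - rmin) / (Real.sqrt (2 * Real.pi) * c) := by
  have hM : ∀ v, |r v| ≤ |rmin| ⊔ |rmax| := by
    intro v
    rcases hrange v with ⟨h1, h2⟩
    rw [abs_le]
    constructor
    · have : -|rmin| ≤ rmin := neg_abs_le rmin
      calc -(|rmin| ⊔ |rmax|) ≤ -|rmin| := by simp [le_max_left]
        _ ≤ rmin := neg_abs_le rmin
        _ ≤ r v := h1
    · calc r v ≤ rmax := h2
        _ ≤ |rmax| := le_abs_self rmax
        _ ≤ |rmin| ⊔ |rmax| := le_max_right _ _
  set M : ℝ := |rmin| ⊔ |rmax| with hMdef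
  have hM0 : (0:ℝ) ≤ M := le_trans (abs_nonneg _) (hM 0)
  -- measurability of the integrand family
  have measF : ∀ x : ℝ, AEStronglyMeasurable
      (fun v => r v * stdPdf ((v - (a * x + (1 - a) * θ)) / c) / c) volume := by
    intro x
    have hm : Measurable fun v : ℝ => (v - (a * x + (1 - a) * θ)) / c :=
      (measurable_id.sub_const _).div_const c
    exact ((hmeas.mul (continuous_stdPdf.measurable.comp hm)).div_const c).aestronglyMeasurable
  have measF' : AEStronglyMeasurable
      (fun v => a / c * (r v * ((v - (a * vi + (1 - a) * θ)) / c) *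
        stdPdf ((v - (a * vi + (1 - a) * θ)) / c) / c)) volume := by
    have hm : Measurable fun v : ℝ => (v - (a * vi + (1 - a) * θ)) / c :=
      (measurable_id.sub_const _).div_const c
    exact ((((hmeas.mul hm).mul (continuous_stdPdf.measurable.comp hm)).div_const
      c).const_mul (a / c)).aestronglyMeasurable
  -- key exponential comparison on the ball
  have key_exp : ∀ x ∈ Metric.ball vi (1:ℝ), ∀ v : ℝ,
      Real.exp (-(((v - (a * x + (1 - a) * θ)) / c) ^ 2) / 4) ≤
        Real.exp (1 / (4 * c ^ 2)) *
          Real.exp (-(1 / (8 * c ^ 2)) * (v - (a * vi + (1 - a) * θ)) ^ 2) := by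
    intro x hx v
    rw [← Real.exp_add, Real.exp_le_exp]
    have hd : |x - vi| < 1 := by rw [Metric.mem_ball, Real.dist_eq] at hx; exact hx
    have hd2 : (a * (x - vi)) ^ 2 ≤ 1 := by
      have h1 : (x - vi) ^ 2 ≤ 1 := by nlinarith [sq_abs (x - vi), abs_nonneg (x - vi)]
      have ha2 : a ^ 2 ≤ 1 := by nlinarith
      calc (a * (x - vi)) ^ 2 = a ^ 2 * (x - vi) ^ 2 := by ring
        _ ≤ 1 * 1 := mul_le_mul ha2 h1 (sq_nonneg _) zero_le_one
        _ = 1 := mul_one 1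
    have hexpand : v - (a * x + (1 - a) * θ) =
        (v - (a * vi + (1 - a) * θ)) - a * (x - vi) := by ring
    rw [hexpand, div_pow, ← sub_nonneg]
    have halg : 1 / (4 * c ^ 2) + -(1 / (8 * c ^ 2)) * (v - (a * vi + (1 - a) * θ)) ^ 2 -
        -((v - (a * vi + (1 - a) * θ) - a * (x - vi)) ^ 2 / c ^ 2) / 4 =
        (((v - (a * vi + (1 - a) * θ)) - 2 * (a * (x - vi))) ^ 2 +
          (2 - 2 * (a * (x - vi)) ^ 2)) / (8 * c ^ 2) := by
      field_simp
      ring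
    rw [halg]
    apply div_nonneg _ (by positivity)
    nlinarith [sq_nonneg ((v - (a * vi + (1 - a) * θ)) - 2 * (a * (x - vi)))]
  -- integrability of F vi
  have hF_int : Integrable
      (fun v => r v * stdPdf ((v - (a * vi + (1 - a) * θ)) / c) / c) := by
    apply Integrable.mono'
      (g := fun v => M * stdPdf ((v - (a * vi + (1 - a) * θ)) / c) / c)
      (((integrable_stdPdf_comp _ c hc).const_mul M).div_const c) (measF vi)
    filter_upwards with v
    rw [Real.norm_eq_abs, abs_div, abs_of_pos hc, abs_mul,
      abs_of_nonneg (stdPdf_nonneg _)]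
    apply (div_le_div_iff_of_pos_right hc).mpr
    exact mul_le_mul_of_nonneg_right (hM v) (stdPdf_nonneg _)
  -- the bound function and its integrability
  have bound_int : Integrable (fun v => a / c *
      (M * ((Real.sqrt (2 * Real.pi))⁻¹ *
        (Real.exp (1 / (4 * c ^ 2)) *
          Real.exp (-(1 / (8 * c ^ 2)) * (v - (a * vi + (1 - a) * θ)) ^ 2))) / c)) := by
    exact (((((integrable_gauss (1 / (8 * c ^ 2)) _ (by positivity)).const_mul
      (Real.exp (1 / (4 * c ^ 2)))).const_mul
      ((Real.sqrt (2 * Real.pi))⁻¹)).const_mul M).div_const c).const_mul (a / c)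
  -- pointwise bound on F'
  have h_bound : ∀ᵐ v : ℝ, ∀ x ∈ Metric.ball vi (1:ℝ),
      ‖a / c * (r v * ((v - (a * x + (1 - a) * θ)) / c) *
        stdPdf ((v - (a * x + (1 - a) * θ)) / c) / c)‖ ≤
      a / c * (M * ((Real.sqrt (2 * Real.pi))⁻¹ *
        (Real.exp (1 / (4 * c ^ 2)) *
          Real.exp (-(1 / (8 * c ^ 2)) * (v - (a * vi + (1 - a) * θ)) ^ 2))) / c) := by
    filter_upwards with v
    intro x hx
    rw [Real.norm_eq_abs, abs_mul, abs_of_pos (div_pos ha hc), abs_div, abs_of_pos hc,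
      abs_mul, abs_mul, abs_of_nonneg (stdPdf_nonneg _)]
    apply mul_le_mul_of_nonneg_left _ (le_of_lt (div_pos ha hc))
    apply (div_le_div_iff_of_pos_right hc).mpr
    calc |r v| * |(v - (a * x + (1 - a) * θ)) / c| *
        stdPdf ((v - (a * x + (1 - a) * θ)) / c)
        = |r v| * (|(v - (a * x + (1 - a) * θ)) / c| *
          stdPdf ((v - (a * x + (1 - a) * θ)) / c)) := by ring
      _ ≤ M * ((Real.sqrt (2 * Real.pi))⁻¹ *
          Real.exp (-(((v - (a * x + (1 - a) * θ)) / c) ^ 2) / 4)) := by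
          exact mul_le_mul (hM v) (abs_mul_stdPdf_le _)
            (mul_nonneg (abs_nonneg _) (stdPdf_nonneg _)) hM0
      _ ≤ M * ((Real.sqrt (2 * Real.pi))⁻¹ *
          (Real.exp (1 / (4 * c ^ 2)) *
            Real.exp (-(1 / (8 * c ^ 2)) * (v - (a * vi + (1 - a) * θ)) ^ 2))) := by
          apply mul_le_mul_of_nonneg_left _ hM0
          apply mul_le_mul_of_nonneg_left (key_exp x hx v) (by positivity)
  -- differentiability pointwise
  have h_diff : ∀ᵐ v : ℝ, ∀ x ∈ Metric.ball vi (1:ℝ),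
      HasDerivAt (fun x => r v * stdPdf ((v - (a * x + (1 - a) * θ)) / c) / c)
        (a / c * (r v * ((v - (a * x + (1 - a) * θ)) / c) *
          stdPdf ((v - (a * x + (1 - a) * θ)) / c) / c)) x := by
    filter_upwards with v
    intro x _
    have hinner : HasDerivAt (fun x : ℝ => (v - (a * x + (1 - a) * θ)) / c) (-a / c) x := by
      have h0 : HasDerivAt (fun x : ℝ => a * x + (1 - a) * θ) a x := by
        simpa using ((hasDerivAt_id x).const_mul a).add_const ((1 - a) * θ)
      simpa using (h0.const_sub v).div_const c
    have h2 := (((hasDerivAt_stdPdf ((v - (a * x + (1 - a) * θ)) / c)).comp x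
      hinner).const_mul (r v)).div_const c
    refine h2.congr_deriv ?_
    ring
  have main := hasDerivAt_integral_of_dominated_loc_of_deriv_le (Metric.ball_mem_nhds vi one_pos)
    (Eventually.of_forall measF) hF_int measF' h_bound bound_int h_diff
  have hD := main.2
  rw [integral_const_mul] at hD
  refine ⟨hD, ?_⟩
  -- now the bound on the derivative
  set μ : ℝ := a * vi + (1 - a) * θ with hμ
  set mid : ℝ := (rmin + rmax) / 2 with hmid
  have hΔ : rmin ≤ rmax := le_trans (hrange 0).1 (hrange 0).2
  have hJint := integrable_J μ c hc
  have hmidb : ∀ v, |r v - mid| ≤ (rmax - rmin) / 2 := by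
    intro v
    rcases hrange v with ⟨h1, h2⟩
    rw [abs_le, hmid]
    constructor <;> linarith
  have hrJ : Integrable (fun v => (r v - mid) *
      ((v - μ) / c * stdPdf ((v - μ) / c) / c)) := by
    apply Integrable.mono' (g := fun v => (rmax - rmin) / 2 *
      |(v - μ) / c * stdPdf ((v - μ) / c) / c|) (hJint.abs.const_mul _)
    · have hm : Measurable fun v : ℝ => (v - μ) / c := (measurable_id.sub_const _).div_const c
      exact ((hmeas.sub measurable_const).mul
        ((hm.mul (continuous_stdPdf.measurable.comp hm)).div_const c)).aestronglyMeasurable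
    · filter_upwards with v
      rw [Real.norm_eq_abs, abs_mul]
      exact mul_le_mul_of_nonneg_right (hmidb v) (abs_nonneg _)
  have hsplit : (∫ v, r v * ((v - μ) / c) * stdPdf ((v - μ) / c) / c) =
      ∫ v, (r v - mid) * ((v - μ) / c * stdPdf ((v - μ) / c) / c) := by
    have h1 : (fun v => r v * ((v - μ) / c) * stdPdf ((v - μ) / c) / c) =
        fun v => (r v - mid) * ((v - μ) / c * stdPdf ((v - μ) / c) / c) +
          mid * ((v - μ) / c * stdPdf ((v - μ) / c) / c) := by
      funext v; ring
    rw [h1, integral_add hrJ (hJint.const_mul mid), integral_const_mul,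
      integral_J_zero μ c hc, mul_zero, add_zero]
  have habs : |∫ v, r v * ((v - μ) / c) * stdPdf ((v - μ) / c) / c| ≤
      (rmax - rmin) / 2 * (2 * (Real.sqrt (2 * Real.pi))⁻¹) := by
    rw [hsplit]
    have h2 := norm_integral_le_of_norm_le (hJint.abs.const_mul ((rmax - rmin) / 2))
      (Eventually.of_forall fun v => by
        rw [Real.norm_eq_abs, abs_mul]
        exact mul_le_mul_of_nonneg_right (hmidb v) (abs_nonneg _))
    rw [Real.norm_eq_abs] at h2
    calc _ ≤ _ := h2
      _ = (rmax - rmin) / 2 * (2 * (Real.sqrt (2 * Real.pi))⁻¹) := by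
        rw [integral_const_mul, integral_abs_J μ c hc]
  rw [abs_mul, abs_of_pos (div_pos ha hc)]
  calc a / c * |∫ v, r v * ((v - μ) / c) * stdPdf ((v - μ) / c) / c| ≤
      a / c * ((rmax - rmin) / 2 * (2 * (Real.sqrt (2 * Real.pi))⁻¹)) :=
        mul_le_mul_of_nonneg_left habs (le_of_lt (div_pos ha hc))
    _ = a * (rmax - rmin) / (Real.sqrt (2 * Real.pi) * c) := by
        have hs : (0:ℝ) < Real.sqrt (2 * Real.pi) := Real.sqrt_pos.mpr (by positivity)
        field_simp

end Stmt18Aux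


/-- the posterior expected reward is differentiable in the valuation, with
    derivative (τ/σv)·∫ r(v)·((v-μ)/σv)·φ((v-μ)/σv)/σv dv, bounded in absolute value by
    τ·(r_max - r_min)/(√(2π)·σv). -/
theorem stmt_18 (θ σε σθ : ℝ) (hσε : 0 < σε) (hσθ : 0 < σθ)
    (τ σv : ℝ) (hτ : τ = σθ ^ 2 / (σε ^ 2 + σθ ^ 2))
    (hσv : σv = σε * σθ / Real.sqrt (σε ^ 2 + σθ ^ 2))
    (r : ℝ → ℝ) (hmeas : Measurable r)
    (rmin rmax : ℝ) (hrange : ∀ v, rmin ≤ r v ∧ r v ≤ rmax) :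
    ∀ vi : ℝ,
      HasDerivAt (postReward θ σε σθ r)
        ((τ / σv) * ∫ v, r v * ((v - (τ * vi + (1 - τ) * θ)) / σv) *
          stdPdf ((v - (τ * vi + (1 - τ) * θ)) / σv) / σv) vi ∧
      |(τ / σv) * ∫ v, r v * ((v - (τ * vi + (1 - τ) * θ)) / σv) *
          stdPdf ((v - (τ * vi + (1 - τ) * θ)) / σv) / σv| ≤
        τ * (rmax - rmin) / (Real.sqrt (2 * Real.pi) * σv) := by
  intro vi
  have hsum : (0:ℝ) < σε ^ 2 + σθ ^ 2 := by positivity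
  have hτpos : 0 < τ := by rw [hτ]; positivity
  have hτle : τ ≤ 1 := by
    rw [hτ]
    exact (div_le_one hsum).mpr (by nlinarith [sq_nonneg σε])
  have hσvpos : 0 < σv := by
    rw [hσv]
    have : (0:ℝ) < Real.sqrt (σε ^ 2 + σθ ^ 2) := Real.sqrt_pos.mpr hsum
    positivity
  have h := Stmt18Aux.key θ τ σv hτpos hτle hσvpos r hmeas rmin rmax hrange vi
  have hpost : postReward θ σε σθ r =
      fun x => ∫ v, r v * stdPdf ((v - (τ * x + (1 - τ) * θ)) / σv) / σv := by
    funext x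
    rw [hτ, hσv]
    rfl
  rw [hpost]
  exact h
end
end
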